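/- Let K : ℝ → ℝ be a continuous (ν+1)-th order kernel with compact support [−1, 1], i.e., ∫K(u)du = 1, ∫u^r K(u)du = 0 for 1 ≤ r ≤ ν, and ∫|u^{ν+1} K(u)|du < ∞. Let f : ℝ → ℝ have continuous (ν+1)-th derivative. Fix x ∈ ℝ. Then as h → 0⁺, (1/h) ∫ K((u − x)/h) f(u) du = f(x) + (κ_{ν+1}/(ν+1)!) f^{(ν+1)}(x) h^{ν+1} + o(h^{ν+1}), where κ_{ν+1} = ∫ u^{ν+1} K(u) du. -/

import Mathlib

/-! After the substitution `u = x + h t` the left-hand side is `∫ K(t) f(x + h t) dt`.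
Expanding `f(x + h t)` to order `ν + 1` by Taylor's theorem, the moment conditions reduce the
Taylor polynomial part to `f x + κ_{ν+1} f^{(ν+1)}(x) h^{ν+1} / (ν+1)!`. Peano's form of the
remainder gives `|R(s)| ≤ ε |s|^{ν+1}` for small `s`; since `K` vanishes outside `[-1, 1]`,
this bounds the remainder integral by `ε h^{ν+1} ∫ |t^{ν+1} K(t)| dt`. -/

open MeasureTheory Filter Asymptotics Topology
open scoped Nat

section Taylor

variable {E : Type*} [NormedAddCommGroup E] [NormedSpace ℝ E]

lemma continuous_taylorWithinEval (f : ℝ → E) (n : ℕ) (s : Set ℝ) (x : ℝ) :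
    Continuous (taylorWithinEval f n s x) := by
  simp_rw [funext (taylor_within_apply f n s x)]
  fun_prop

lemma isLittleO_taylor_remainder {f : ℝ → E} {n : ℕ} (hf : ContDiff ℝ n f) (x : ℝ) :
    (fun s => f (x + s) - taylorWithinEval f n Set.univ x (x + s)) =o[𝓝 0] (· ^ n) := by
  have hshift : Tendsto (x + ·) (𝓝 0) (𝓝 x) := by
    simpa using (continuous_const_add x).tendsto 0
  simpa [Function.comp_def] using (taylor_isLittleO_univ hf (x₀ := x)).comp_tendsto hshift

end Taylor

lemma one_div_mul_integral_comp_sub_div (K g : ℝ → ℝ) (x : ℝ) {h : ℝ} (hh : 0 < h) :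
    1 / h * ∫ u, K ((u - x) / h) * g u = ∫ t, K t * g (x + h * t) := by
  have hrescale := Measure.integral_comp_mul_left (fun y => K ((x + y - x) / h) * g (x + y)) h
  simp only [add_sub_cancel_left, mul_div_cancel_left₀ _ hh.ne'] at hrescale
  rw [hrescale, ← integral_add_left_eq_self (fun u => K ((u - x) / h) * g u) x,
    abs_of_pos (inv_pos.2 hh), smul_eq_mul, one_div]
  simp only [add_sub_cancel_left]

lemma integral_mul_taylorWithinEval {K : ℝ → ℝ} (hK : ∀ k, Integrable fun t => t ^ k * K t)
    (f : ℝ → ℝ) (n : ℕ) (x h : ℝ) :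
    ∫ t, K t * taylorWithinEval f n Set.univ x (x + h * t)
      = ∑ k ∈ Finset.range (n + 1), iteratedDeriv k f x / k ! * h ^ k * ∫ t, t ^ k * K t := by
  have hterm : ∀ t, K t * taylorWithinEval f n Set.univ x (x + h * t)
      = ∑ k ∈ Finset.range (n + 1), iteratedDeriv k f x / k ! * h ^ k * (t ^ k * K t) := by
    intro t
    rw [taylor_within_apply, Finset.mul_sum]
    refine Finset.sum_congr rfl fun k _ => ?_
    rw [iteratedDerivWithin_univ, smul_eq_mul, add_sub_cancel_left, mul_pow]
    ring
  simp_rw [hterm]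
  rw [integral_finsetSum _ fun k _ => (hK k).const_mul _]
  simp_rw [integral_const_mul]

lemma sum_moments_eq_of_vanishing_moments {ν : ℕ} {K : ℝ → ℝ} (hK1 : ∫ u, K u = 1)
    (hKmom : ∀ r : ℕ, 1 ≤ r → r ≤ ν → ∫ u, u ^ r * K u = 0)
    (c : ℕ → ℝ) (h : ℝ) :
    ∑ k ∈ Finset.range (ν + 2), c k * h ^ k * ∫ t, t ^ k * K t
      = c 0 + c (ν + 1) * h ^ (ν + 1) * ∫ t, t ^ (ν + 1) * K t := by
  rw [Finset.sum_range_succ, Finset.sum_range_succ', Finset.sum_eq_zero fun k hk => by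
    rw [hKmom (k + 1) (by omega) (by simpa [Nat.lt_succ_iff] using hk), mul_zero]]
  simp [hK1]

lemma isLittleO_integral_mul_comp_mul {n : ℕ} {K R : ℝ → ℝ}
    (hKsupp : ∀ u, 1 < |u| → K u = 0) (hKint : Integrable fun u => |u ^ n * K u|)
    (hR : R =o[𝓝 0] (· ^ n)) :
    (fun h => ∫ t, K t * R (h * t)) =o[𝓝 0] (· ^ n) := by
  set C := ∫ u, |u ^ n * K u|
  have hC : 0 ≤ C := integral_nonneg fun u => abs_nonneg _
  refine isLittleO_iff.2 fun c hc => ?_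
  set ε := c / (C + 1)
  obtain ⟨δ, hδ, hRδ⟩ :=
    Metric.eventually_nhds_iff_ball.1 (isLittleO_iff.1 hR (by positivity : 0 < ε))
  filter_upwards [Metric.ball_mem_nhds 0 hδ] with h hh
  have hpointwise : ∀ t, ‖K t * R (h * t)‖ ≤ ε * ‖h ^ n‖ * |t ^ n * K t| := by
    intro t
    rcases le_or_gt |t| 1 with ht | ht
    · have hht : h * t ∈ Metric.ball 0 δ := by
        rw [mem_ball_zero_iff] at hh ⊢
        rw [norm_mul]
        exact lt_of_le_of_lt (mul_le_of_le_one_right (norm_nonneg h) ht) hh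
      calc ‖K t * R (h * t)‖ = |K t| * ‖R (h * t)‖ := by rw [norm_mul, Real.norm_eq_abs]
        _ ≤ |K t| * (ε * ‖(h * t) ^ n‖) := by gcongr; exact hRδ _ hht
        _ = ε * ‖h ^ n‖ * |t ^ n * K t| := by
          simp only [norm_pow, norm_mul, Real.norm_eq_abs, abs_mul, abs_pow, mul_pow]; ring
    · simp [hKsupp t ht]
  calc ‖∫ t, K t * R (h * t)‖ ≤ ∫ t, ε * ‖h ^ n‖ * |t ^ n * K t| :=
        norm_integral_le_of_norm_le (hKint.const_mul _) (Eventually.of_forall hpointwise)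
    _ = c * (C / (C + 1)) * ‖h ^ n‖ := by rw [integral_const_mul]; ring
    _ ≤ c * 1 * ‖h ^ n‖ := by gcongr; exact div_le_one_of_le₀ (by linarith) (by linarith)
    _ = c * ‖h ^ n‖ := by rw [mul_one]

theorem higher_order_kernel_expansion (ν : ℕ) (K : ℝ → ℝ) (hKc : Continuous K)
    (hKsupp : ∀ u, 1 < |u| → K u = 0)
    (hK1 : ∫ u, K u = 1)
    (hKmom : ∀ r : ℕ, 1 ≤ r → r ≤ ν → ∫ u, u ^ r * K u = 0)
    (hKint : Integrable (fun u => |u ^ (ν + 1) * K u|))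
    (f : ℝ → ℝ) (hf : ContDiff ℝ (ν + 1) f) (x : ℝ) :
    (fun h : ℝ => (1 / h) * (∫ u, K ((u - x) / h) * f u)
        - (f x + (∫ u, u ^ (ν + 1) * K u) / (Nat.factorial (ν + 1))
            * iteratedDeriv (ν + 1) f x * h ^ (ν + 1)))
      =o[nhdsWithin 0 (Set.Ioi 0)] (fun h : ℝ => h ^ (ν + 1)) := by
  have hf' : ContDiff ℝ (ν + 1 : ℕ) f := by exact_mod_cast hf
  have hKcs : HasCompactSupport K :=
    HasCompactSupport.intro (isCompact_closedBall 0 1) fun u hu => hKsupp u (by simpa using hu)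
  have hint : ∀ g : ℝ → ℝ, Continuous g → Integrable fun t => K t * g t :=
    fun g hg => (hKc.mul hg).integrable_of_hasCompactSupport hKcs.mul_right
  have hmom : ∀ k, Integrable fun t : ℝ => t ^ k * K t :=
    fun k => by simpa only [mul_comm] using hint _ (continuous_pow k)
  set P := taylorWithinEval f (ν + 1) Set.univ x
  refine ((isLittleO_integral_mul_comp_mul hKsupp hKint (isLittleO_taylor_remainder hf' x)).mono
    nhdsWithin_le_nhds).congr' ?_ EventuallyEq.rfl
  filter_upwards [self_mem_nhdsWithin] with h hh
  calc ∫ t, K t * (f (x + h * t) - P (x + h * t))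
      = (∫ t, K t * f (x + h * t)) - ∫ t, K t * P (x + h * t) := by
        simp_rw [mul_sub]
        exact integral_sub (hint (fun t => f (x + h * t)) (by fun_prop))
          (hint (fun t => P (x + h * t)) ((continuous_taylorWithinEval f _ _ x).comp (by fun_prop)))
    _ = _ := by
        rw [one_div_mul_integral_comp_sub_div K f x hh, integral_mul_taylorWithinEval hmom,
          sum_moments_eq_of_vanishing_moments hK1 hKmom]
        simp only [iteratedDeriv_zero, Nat.factorial_zero, Nat.cast_one, div_one]
        ring
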